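/- arXiv:1303.7305 — 5 statements merged into one kernel-verified Lean document; each statement's English description precedes it below -/
import Mathlib

section
/- Let X ⊆ ℓ^∞ be a compact connected set, x ∈ X, r > 0 and c > 0. If X ∩ B(x,r) has a c-antenna, then β'_X(x,r) ≥ c/14. -/
open Metric Set MeasureTheory

noncomputable section

/-- `ℓ^∞`, the Banach space of bounded real sequences with the sup norm. -/
abbrev lInf : Type := lp (fun _ : ℕ => ℝ) ⊤

/-- The set of values whose infimum defines `β'_X(x,r)`: for each rectifiable curve
`s : [0,1] → B(x,r)` with `s 0 ≠ s 1`, the quantity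
`(ℓ(s) − |s(0)−s(1)| + sup_{z ∈ X ∩ B(x,r)} dist(z, s([0,1]))) / |s(0)−s(1)|`. -/
def betaPrimeSet {E : Type*} [NormedAddCommGroup E] (X : Set E) (x : E) (r : ℝ) : Set ℝ :=
  { b | ∃ s : ℝ → E, ContinuousOn s (Set.Icc 0 1) ∧
      (∀ t ∈ Set.Icc (0:ℝ) 1, s t ∈ Metric.ball x r) ∧
      s 0 ≠ s 1 ∧ eVariationOn s (Set.Icc 0 1) ≠ ⊤ ∧
      b = ((eVariationOn s (Set.Icc 0 1)).toReal - dist (s 0) (s 1)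
          + ⨆ z ∈ X ∩ Metric.ball x r, Metric.infDist z (s '' Set.Icc 0 1)) / dist (s 0) (s 1) }

/-- `β'_X(x,r)`. -/
def betaPrime {E : Type*} [NormedAddCommGroup E] (X : Set E) (x : E) (r : ℝ) : ℝ :=
  sInf (betaPrimeSet X x r)

def stdVec (i : Fin 3) : EuclideanSpace ℝ (Fin 3) := EuclideanSpace.single i 1

/-- The antenna template `Y = [0,e₁] ∪ [0,e₂] ∪ [0,e₃] ⊆ ℝ³`. -/
def antennaY : Set (EuclideanSpace ℝ (Fin 3)) := ⋃ i : Fin 3, segment ℝ 0 (stdVec i)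

/-- The tip `e_i` of the antenna, as a point of `Y`. -/
def eY (i : Fin 3) : antennaY := ⟨stdVec i, Set.mem_iUnion.2 ⟨i, right_mem_segment ℝ 0 (stdVec i)⟩⟩

/-- The points of `Y` lying on the two arms `[0,e_j] ∪ [0,e_k]`. -/
def armPair (j k : Fin 3) : Set antennaY :=
  {p | (p : EuclideanSpace ℝ (Fin 3)) ∈ segment ℝ 0 (stdVec j) ∪ segment ℝ 0 (stdVec k)}

/-- The ball `B_X(x,r)` has a `c`-antenna: there is a topological embedding `h` of `Y` into `X`
with image inside `B_X(x,r)` such that `dist(h(e_i), h([0,e_j] ∪ [0,e_k])) ≥ c·r` for every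
permutation `(i,j,k)` of `(1,2,3)`. -/
def HasAntenna {E : Type*} [MetricSpace E] (x : E) (r c : ℝ) : Prop :=
  ∃ h : antennaY → E, Topology.IsEmbedding h ∧ (∀ p, h p ∈ Metric.ball x r) ∧
    ∀ i j k : Fin 3, i ≠ j → j ≠ k → i ≠ k →
      c * r ≤ Metric.infDist (h (eY i)) (h '' armPair j k)

/-- `X ∩ B(x,r)` has a `c`-antenna, for a subset `X` of an ambient metric space. -/
def HasAntennaIn {E : Type*} [MetricSpace E] (X : Set E) (x : E) (r c : ℝ) : Prop :=
  ∃ h : antennaY → E, Topology.IsEmbedding h ∧ (∀ p, h p ∈ X ∩ Metric.ball x r) ∧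
    ∀ i j k : Fin 3, i ≠ j → j ≠ k → i ≠ k →
      c * r ≤ Metric.infDist (h (eY i)) (h '' armPair j k)

/-- `X` is `c`-antenna-like: `B_X(x,r)` has a `c`-antenna for all `x ∈ X`, `0 < r < diam X / 2`. -/
def AntennaLike (X : Type*) [MetricSpace X] (c : ℝ) : Prop :=
  ∀ (x : X) (r : ℝ), 0 < r → r < Metric.diam (Set.univ : Set X) / 2 → HasAntenna x r c

/-!
Let `s` be an admissible curve and `S` the supremum in `β'_X(x,r)`, so that every point of
`X ∩ B(x,r)` lies within `S` of `s`. Attach to the three tips of the antenna times on `[0,1]`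
where `s` passes within `S` of them, and let `a_m` be the tip whose time `t_m` lies between the
other two. The two arms through the other tips form a connected set, covered by the closed
`S`-neighbourhoods of `s([0,t_m])` and `s([t_m,1])` and meeting both; hence one of its points `z`
is `S`-close to `s(u)` and to `s(v)` with `u ≤ t_m ≤ v`. As `z` lies at distance `≥ cr` from
`a_m`, the curve runs at least `cr - 2S` from `s(u)` to `s(t_m)` and again from `s(t_m)` to
`s(v)`, while `|s(u) - s(v)| ≤ 2S`; so `ℓ(s) - |s(0) - s(1)| ≥ 2cr - 6S`. Together with
`ℓ(s) ≥ |s(0) - s(1)|` this gives `ℓ(s) - |s(0) - s(1)| + S ≥ cr/3`, and `|s(0) - s(1)| < 2r`.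
-/

section Variation

variable {α E : Type*} [LinearOrder α] [PseudoMetricSpace E] {f : α → E}

lemma dist_le_toReal_eVariationOn {s : Set α} (hf : eVariationOn f s ≠ ⊤) {x y : α}
    (hx : x ∈ s) (hy : y ∈ s) : dist (f x) (f y) ≤ (eVariationOn f s).toReal := by
  rw [dist_edist]
  exact ENNReal.toReal_mono hf (eVariationOn.edist_le f hx hy)

variable {a b c : α}

lemma eVariationOn_Icc_add_Icc (hab : a ≤ b) (hbc : b ≤ c) :
    eVariationOn f (Icc a b) + eVariationOn f (Icc b c) = eVariationOn f (Icc a c) := by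
  simpa only [univ_inter] using eVariationOn.Icc_add_Icc f hab hbc (mem_univ b)

lemma toReal_eVariationOn_Icc_add_Icc (hab : a ≤ b) (hbc : b ≤ c)
    (hf : eVariationOn f (Icc a c) ≠ ⊤) :
    (eVariationOn f (Icc a b)).toReal + (eVariationOn f (Icc b c)).toReal =
      (eVariationOn f (Icc a c)).toReal := by
  rw [← eVariationOn_Icc_add_Icc hab hbc] at hf ⊢
  exact (ENNReal.toReal_add (ENNReal.add_ne_top.1 hf).1 (ENNReal.add_ne_top.1 hf).2).symm

lemma dist_add_dist_le_toReal_eVariationOn (hab : a ≤ b) (hbc : b ≤ c)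
    (hf : eVariationOn f (Icc a c) ≠ ⊤) :
    dist (f a) (f b) + dist (f b) (f c) ≤ (eVariationOn f (Icc a c)).toReal := by
  rw [← toReal_eVariationOn_Icc_add_Icc hab hbc hf]
  rw [← eVariationOn_Icc_add_Icc hab hbc] at hf
  gcongr
  · exact dist_le_toReal_eVariationOn (ENNReal.add_ne_top.1 hf).1
      (left_mem_Icc.2 hab) (right_mem_Icc.2 hab)
  · exact dist_le_toReal_eVariationOn (ENNReal.add_ne_top.1 hf).2
      (left_mem_Icc.2 hbc) (right_mem_Icc.2 hbc)

lemma dist_chain_le_toReal_eVariationOn {u t v : α} (hau : a ≤ u) (hut : u ≤ t) (htv : t ≤ v)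
    (hvb : v ≤ b) (hf : eVariationOn f (Icc a b) ≠ ⊤) :
    dist (f a) (f u) + dist (f u) (f t) + dist (f t) (f v) + dist (f v) (f b) ≤
      (eVariationOn f (Icc a b)).toReal := by
  have hat := hau.trans hut
  have htb := htv.trans hvb
  rw [← toReal_eVariationOn_Icc_add_Icc hat htb hf]
  rw [← eVariationOn_Icc_add_Icc hat htb] at hf
  linarith [dist_add_dist_le_toReal_eVariationOn hau hut (ENNReal.add_ne_top.1 hf).1,
    dist_add_dist_le_toReal_eVariationOn htv hvb (ENNReal.add_ne_top.1 hf).2]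

end Variation

section CurveNeighbourhood

variable {E : Type*} [PseudoMetricSpace E] {s : ℝ → E} {a b S : ℝ}

lemma infDist_image_Icc_le_iff (hs : ContinuousOn s (Icc a b)) (hab : a ≤ b) {z : E} :
    infDist z (s '' Icc a b) ≤ S ↔ ∃ τ ∈ Icc a b, dist z (s τ) ≤ S := by
  constructor
  · intro h
    obtain ⟨_, ⟨τ, hτ, rfl⟩, hzτ⟩ :=
      (isCompact_Icc.image_of_continuousOn hs).exists_infDist_eq_dist
        ((nonempty_Icc.2 hab).image s) z
    exact ⟨τ, hτ, hzτ ▸ h⟩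
  · rintro ⟨τ, hτ, hzτ⟩
    exact (infDist_le_dist_of_mem (mem_image_of_mem s hτ)).trans hzτ

lemma IsPreconnected.exists_near_Icc_near_Icc {A : Set E} (hA : IsPreconnected A)
    (hs : ContinuousOn s (Icc a b)) (hAS : ∀ z ∈ A, infDist z (s '' Icc a b) ≤ S)
    {t tp tq : ℝ} (hatp : a ≤ tp) (htpt : tp ≤ t) (httq : t ≤ tq) (htqb : tq ≤ b)
    {p q : E} (hp : p ∈ A) (hq : q ∈ A) (hpS : dist p (s tp) ≤ S) (hqS : dist q (s tq) ≤ S) :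
    ∃ z ∈ A, ∃ u ∈ Icc a t, ∃ v ∈ Icc t b, dist z (s u) ≤ S ∧ dist z (s v) ≤ S := by
  have hat := hatp.trans htpt
  have htb := httq.trans htqb
  have hs₁ := hs.mono (Icc_subset_Icc le_rfl htb)
  have hs₂ := hs.mono (Icc_subset_Icc hat le_rfl)
  have hcover :
      A ⊆ {z | infDist z (s '' Icc a t) ≤ S} ∪ {z | infDist z (s '' Icc t b) ≤ S} := by
    intro z hz
    obtain ⟨τ, hτ, hzτ⟩ := (infDist_image_Icc_le_iff hs (hat.trans htb)).1 (hAS z hz)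
    rcases le_total τ t with hτt | hτt
    · exact Or.inl ((infDist_image_Icc_le_iff hs₁ hat).2 ⟨τ, ⟨hτ.1, hτt⟩, hzτ⟩)
    · exact Or.inr ((infDist_image_Icc_le_iff hs₂ htb).2 ⟨τ, ⟨hτt, hτ.2⟩, hzτ⟩)
  obtain ⟨z, hzA, hz₁, hz₂⟩ := isPreconnected_closed_iff.1 hA _ _
    (isClosed_le (continuous_infDist_pt _) continuous_const)
    (isClosed_le (continuous_infDist_pt _) continuous_const) hcover
    ⟨p, hp, (infDist_image_Icc_le_iff hs₁ hat).2 ⟨tp, ⟨hatp, htpt⟩, hpS⟩⟩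
    ⟨q, hq, (infDist_image_Icc_le_iff hs₂ htb).2 ⟨tq, ⟨httq, htqb⟩, hqS⟩⟩
  obtain ⟨u, hu, hzu⟩ := (infDist_image_Icc_le_iff hs₁ hat).1 hz₁
  obtain ⟨v, hv, hzv⟩ := (infDist_image_Icc_le_iff hs₂ htb).1 hz₂
  exact ⟨z, hzA, u, hu, v, hv, hzu, hzv⟩

lemma IsPreconnected.two_mul_infDist_sub_le_toReal_eVariationOn_sub_dist {A : Set E}
    (hA : IsPreconnected A) (hs : ContinuousOn s (Icc a b)) (hf : eVariationOn s (Icc a b) ≠ ⊤)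
    (hAS : ∀ z ∈ A, infDist z (s '' Icc a b) ≤ S)
    {t tp tq : ℝ} (hatp : a ≤ tp) (htpt : tp ≤ t) (httq : t ≤ tq) (htqb : tq ≤ b)
    {p q w : E} (hp : p ∈ A) (hq : q ∈ A)
    (hpS : dist p (s tp) ≤ S) (hqS : dist q (s tq) ≤ S) (hwS : dist w (s t) ≤ S) :
    2 * infDist w A - 6 * S ≤ (eVariationOn s (Icc a b)).toReal - dist (s a) (s b) := by
  obtain ⟨z, hzA, u, hu, v, hv, hzu, hzv⟩ :=
    hA.exists_near_Icc_near_Icc hs hAS hatp htpt httq htqb hp hq hpS hqS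
  have hwz : infDist w A ≤ dist w z := infDist_le_dist_of_mem hzA
  linarith [dist_chain_le_toReal_eVariationOn hu.1 hu.2 hv.1 hv.2 hf,
    dist_triangle4 w (s t) (s u) z, dist_triangle4 w (s t) (s v) z,
    dist_triangle4 (s a) (s u) (s v) (s b), dist_triangle (s u) z (s v),
    dist_comm (s u) (s t), dist_comm z (s u), dist_comm z (s v)]

end CurveNeighbourhood

lemma Fin.exists_ne_le_le {α : Type*} [LinearOrder α] (t : Fin 3 → α) :
    ∃ j m k : Fin 3, m ≠ j ∧ j ≠ k ∧ m ≠ k ∧ t j ≤ t m ∧ t m ≤ t k :=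
  ⟨Tuple.sort t 0, Tuple.sort t 1, Tuple.sort t 2, (Tuple.sort t).injective.ne (by decide),
    (Tuple.sort t).injective.ne (by decide), (Tuple.sort t).injective.ne (by decide),
    Tuple.monotone_sort t (by decide : (0 : Fin 3) ≤ 1),
    Tuple.monotone_sort t (by decide : (1 : Fin 3) ≤ 2)⟩

lemma eY_mem_armPair_left (j k : Fin 3) : eY j ∈ armPair j k :=
  Or.inl (right_mem_segment ℝ 0 (stdVec j))

lemma eY_mem_armPair_right (j k : Fin 3) : eY k ∈ armPair j k :=
  Or.inr (right_mem_segment ℝ 0 (stdVec k))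

lemma eY_zero_ne_one : eY 0 ≠ eY 1 := fun h => by
  simpa [eY, stdVec] using congrArg (fun p : antennaY => (p : EuclideanSpace ℝ (Fin 3)) 0) h

lemma isPreconnected_armPair (j k : Fin 3) : IsPreconnected (armPair j k) := by
  rw [← Topology.IsInducing.subtypeVal.isPreconnected_image]
  set arms := segment ℝ 0 (stdVec j) ∪ segment ℝ 0 (stdVec k)
  have harms : arms ⊆ antennaY :=
    union_subset (subset_iUnion (fun i => segment ℝ 0 (stdVec i)) j)
      (subset_iUnion (fun i => segment ℝ 0 (stdVec i)) k)
  rw [show armPair j k = Subtype.val ⁻¹' arms from rfl, Subtype.image_preimage_coe,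
    inter_eq_right.2 harms]
  exact IsPreconnected.union 0 (left_mem_segment ℝ _ _) (left_mem_segment ℝ _ _)
    (convex_segment _ _).isPreconnected (convex_segment _ _).isPreconnected

lemma HasAntennaIn.mul_div_three_le {E : Type*} [MetricSpace E] {X : Set E} {x : E}
    {r c S : ℝ} (hant : HasAntennaIn X x r c) {s : ℝ → E} (hs : ContinuousOn s (Icc 0 1))
    (hf : eVariationOn s (Icc 0 1) ≠ ⊤)
    (hS : ∀ z ∈ X ∩ ball x r, infDist z (s '' Icc 0 1) ≤ S) :
    c * r / 3 ≤ (eVariationOn s (Icc 0 1)).toReal - dist (s 0) (s 1) + S := by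
  obtain ⟨h, hemb, hmem, hsep⟩ := hant
  choose t ht hdt using fun i ↦
    (infDist_image_Icc_le_iff hs zero_le_one).1 (hS (h (eY i)) (hmem _))
  obtain ⟨j, m, k, hmj, hjk, hmk, htjm, htmk⟩ := Fin.exists_ne_le_le t
  have hA : IsPreconnected (h '' armPair j k) :=
    (isPreconnected_armPair j k).image h hemb.continuous.continuousOn
  have hexcess := hA.two_mul_infDist_sub_le_toReal_eVariationOn_sub_dist hs hf
    (by rintro _ ⟨p, -, rfl⟩; exact hS _ (hmem p)) (ht j).1 htjm htmk (ht k).2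
    ⟨eY j, eY_mem_armPair_left j k, rfl⟩ ⟨eY k, eY_mem_armPair_right j k, rfl⟩
    (hdt j) (hdt k) (hdt m)
  have hchord := dist_le_toReal_eVariationOn hf (left_mem_Icc.2 zero_le_one)
    (right_mem_Icc.2 (zero_le_one' ℝ))
  linarith [hsep m j k hmj hjk hmk]

lemma betaPrimeSet_nonempty_of_ne {E : Type*} [NormedAddCommGroup E] [NormedSpace ℝ E]
    {X : Set E} {x p q : E} {r : ℝ} (hp : p ∈ ball x r) (hq : q ∈ ball x r) (hpq : p ≠ q) :
    (betaPrimeSet X x r).Nonempty := by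
  have hlip := lipschitzWith_lineMap (𝕜 := ℝ) p q
  refine ⟨_, AffineMap.lineMap p q, hlip.continuous.continuousOn,
    fun t ht => (convex_ball x r).lineMap_mem hp hq ht, by simpa using hpq, ?_, rfl⟩
  simpa [BoundedVariationOn] using
    (hlip.lipschitzOnWith (s := Icc (0 : ℝ) 1)).locallyBoundedVariationOn 0 1
      (left_mem_Icc.2 zero_le_one) (right_mem_Icc.2 zero_le_one)

lemma HasAntennaIn.betaPrimeSet_nonempty {E : Type*} [NormedAddCommGroup E] [NormedSpace ℝ E]
    {X : Set E} {x : E} {r c : ℝ} (hant : HasAntennaIn X x r c) :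
    (betaPrimeSet X x r).Nonempty := by
  obtain ⟨_, hemb, hmem, -⟩ := hant
  exact betaPrimeSet_nonempty_of_ne (hmem (eY 0)).2 (hmem (eY 1)).2
    (hemb.injective.ne eY_zero_ne_one)

lemma infDist_le_biSup_inter_ball {E : Type*} [PseudoMetricSpace E] {X Γ : Set E} {x y z : E}
    {r : ℝ} (hy : y ∈ Γ) (hz : z ∈ X ∩ ball x r) :
    infDist z Γ ≤ ⨆ w ∈ X ∩ ball x r, infDist w Γ := by
  have hr := pos_of_mem_ball hz.2
  have hbdd : BddAbove (range fun w ↦ ⨆ _ : w ∈ X ∩ ball x r, infDist w Γ) := by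
    refine ⟨r + dist x y, forall_mem_range.2 fun w ↦ Real.iSup_le (fun hw ↦ ?_) (by positivity)⟩
    linarith [infDist_le_dist_of_mem (x := w) hy, dist_triangle w x y, mem_ball.1 hw.2]
  exact (ciSup_pos hz).ge.trans (le_ciSup hbdd z)

/-- **Theorem.** If `X ⊆ ℓ^∞` is compact and connected, `x ∈ X`, `r > 0`, `c > 0`, and
`X ∩ B(x,r)` has a `c`-antenna, then `β'_X(x,r) ≥ c/14`. -/
theorem betaPrime_ge_of_hasAntenna :
    ∀ X : Set lInf, IsCompact X → IsConnected X →
      ∀ x ∈ X, ∀ r c : ℝ, 0 < r → 0 < c →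
        HasAntennaIn X x r c → c / 14 ≤ betaPrime X x r := by
  intro X _ _ x _ r c hr hc hant
  refine le_csInf hant.betaPrimeSet_nonempty ?_
  rintro _ ⟨s, hs, hball, hne, hf, rfl⟩
  have hexcess := hant.mul_div_three_le hs hf fun z hz =>
    infDist_le_biSup_inter_ball (mem_image_of_mem s (left_mem_Icc.2 zero_le_one)) hz
  have hchord : dist (s 0) (s 1) < 2 * r := by
    linarith [dist_triangle_right (s 0) (s 1) x,
      mem_ball.1 (hball 0 (left_mem_Icc.2 zero_le_one)),
      mem_ball.1 (hball 1 (right_mem_Icc.2 zero_le_one))]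
  rw [le_div_iff₀ (dist_pos.2 hne)]
  nlinarith [mul_pos hc hr]
end
end

section
/- With the cube construction below, assume M > 4 and c ∈ (0, 1/8). Then: (1) for all Q, R ∈ Δ with Q ∩ R ≠ ∅, either Q ⊆ R or R ⊆ Q; (2) for every Q ∈ Δ, B_Q ⊆ Q ⊆ (1 + 8M⁻¹)B_Q. -/
open Metric Set MeasureTheory

noncomputable section

/-- The scaled ball `cB` for `B = B(x, M^{-n}) ∈ 𝓑_n`. -/
def cBall (M c : ℝ) (x : lInf) (n : ℕ) : Set lInf :=
  Metric.ball x (c * M ^ (-(n : ℤ)))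

/-- The increasing sequence of sets `Q⁰_B ⊆ Q¹_B ⊆ ⋯` building the cube `Q_B`:
`Q⁰_B = cB` and `Q^{j+1}_B = Q^j_B ∪ ⋃ {cB' : B' ∈ ⋃_{m ≥ n} 𝓑_m, cB' ∩ Q^j_B ≠ ∅}`. -/
def coreAux (M c : ℝ) (Xn : ℕ → Set lInf) (x : lInf) (n : ℕ) : ℕ → Set lInf
  | 0 => cBall M c x n
  | j + 1 => coreAux M c Xn x n j ∪
      ⋃ (m : ℕ) (_ : n ≤ m) (y : lInf) (_ : y ∈ Xn m)
        (_ : (cBall M c y m ∩ coreAux M c Xn x n j).Nonempty), cBall M c y m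

/-- The cube (``core``) `Q_B = ⋃_j Q^j_B` associated to the ball `B = B(x, M^{-n})`. -/
def core (M c : ℝ) (Xn : ℕ → Set lInf) (x : lInf) (n : ℕ) : Set lInf :=
  ⋃ j, coreAux M c Xn x n j

/-! Two cubes that meet are nested because a cube `Q_B` is saturated: every ball `cB'` of
scale at least that of `B` which meets `Q_B` lies in it. If `Q_{B'}` meets `Q_B` and `B'` has
the smaller scale, then `cB'` already meets `Q_B`, and the whole construction of `Q_{B'}`
stays inside `Q_B`, step by step.

For roundness, a point of `Q_B` lies in the last ball of a chain of pairwise meeting balls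
`cB'`, `B' ∈ 𝓑_m` with `m ≥ n`, starting at `cB`. Cut the chain at its visits to scale `n`:
between two consecutive visits it runs through balls of scale `≥ n + 1`, which by induction
stay within `4 c M^{-n-1} ≤ c M^{-n}` of where they entered; hence consecutive visits have
centres less than `3 c M^{-n} < M^{-n}` apart, so by separation of `X_n` they are all the
ball `cB` itself, and every ball of the chain lies in `B(x, (1 + 4M⁻¹) c M^{-n})`. -/

open List

lemma List.forall_not_or_exists_first {α : Type*} (P : α → Prop) (l : List α) :
    (∀ x ∈ l, ¬ P x) ∨
      ∃ l₁ x l₂, l = l₁ ++ x :: l₂ ∧ P x ∧ ∀ y ∈ l₁, ¬ P y := by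
  induction l with
  | nil => simp
  | cons a l ih =>
    by_cases ha : P a
    · exact .inr ⟨[], a, l, rfl, ha, by simp⟩
    · rcases ih with h | ⟨l₁, x, l₂, rfl, hx, h⟩
      · exact .inl (forall_mem_cons.2 ⟨ha, h⟩)
      · exact .inr ⟨a :: l₁, x, l₂, rfl, hx, forall_mem_cons.2 ⟨ha, h⟩⟩

variable {M c : ℝ} {Xn : ℕ → Set lInf}

section Nesting

lemma coreAux_subset_core (x : lInf) (n j : ℕ) : coreAux M c Xn x n j ⊆ core M c Xn x n :=
  subset_iUnion (coreAux M c Xn x n) j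

lemma cBall_subset_core (x : lInf) (n : ℕ) : cBall M c x n ⊆ core M c Xn x n :=
  coreAux_subset_core x n 0

variable {n m : ℕ} {x y : lInf}

lemma cBall_subset_core_of_nonempty (hnm : n ≤ m) (hy : y ∈ Xn m)
    (h : (cBall M c y m ∩ core M c Xn x n).Nonempty) : cBall M c y m ⊆ core M c Xn x n := by
  obtain ⟨z, hzy, hzx⟩ := h
  obtain ⟨j, hj⟩ := mem_iUnion.mp hzx
  refine Subset.trans (fun w hw => ?_) (coreAux_subset_core x n (j + 1))
  simp only [coreAux, mem_union, mem_iUnion]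
  exact Or.inr ⟨m, hnm, y, hy, ⟨z, hzy, hj⟩, hw⟩

lemma cBall_inter_core_nonempty_of_coreAux (hnm : n ≤ m) (j : ℕ)
    (h : (coreAux M c Xn y m j ∩ core M c Xn x n).Nonempty) :
    (cBall M c y m ∩ core M c Xn x n).Nonempty := by
  induction j with
  | zero => exact h
  | succ j ih =>
    obtain ⟨z, hzy, hzx⟩ := h
    simp only [coreAux, mem_union, mem_iUnion] at hzy
    rcases hzy with hzy | ⟨m', hm', y', hy', ⟨w, hwy', hwy⟩, hzy'⟩
    · exact ih ⟨z, hzy, hzx⟩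
    · have hsub := cBall_subset_core_of_nonempty (hnm.trans hm') hy' ⟨z, hzy', hzx⟩
      exact ih ⟨w, hwy, hsub hwy'⟩

lemma coreAux_subset_core_of_cBall_subset (hnm : n ≤ m) (h : cBall M c y m ⊆ core M c Xn x n)
    (j : ℕ) : coreAux M c Xn y m j ⊆ core M c Xn x n := by
  induction j with
  | zero => exact h
  | succ j ih =>
    refine union_subset ih fun z hz => ?_
    simp only [mem_iUnion] at hz
    obtain ⟨m', hm', y', hy', ⟨w, hwy', hwy⟩, hzy'⟩ := hz
    exact cBall_subset_core_of_nonempty (hnm.trans hm') hy' ⟨w, hwy', ih hwy⟩ hzy'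

lemma core_subset_core_of_nonempty (hnm : n ≤ m) (hy : y ∈ Xn m)
    (h : (core M c Xn x n ∩ core M c Xn y m).Nonempty) : core M c Xn y m ⊆ core M c Xn x n := by
  obtain ⟨z, hzx, hzy⟩ := h
  obtain ⟨j, hj⟩ := mem_iUnion.mp hzy
  have hball := cBall_subset_core_of_nonempty hnm hy
    (cBall_inter_core_nonempty_of_coreAux hnm j ⟨z, hj, hzx⟩)
  exact iUnion_subset (coreAux_subset_core_of_cBall_subset hnm hball)

end Nesting

section Radius

def cRad (M c : ℝ) (k : ℕ) : ℝ := c * M ^ (-(k : ℤ))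

lemma cRad_nonneg (hM : 0 ≤ M) (hc : 0 ≤ c) (k : ℕ) : 0 ≤ cRad M c k :=
  mul_nonneg hc (zpow_nonneg hM _)

lemma cRad_antitone (hM : 1 ≤ M) (hc : 0 ≤ c) : Antitone (cRad M c) := fun k k' h =>
  mul_le_mul_of_nonneg_left (zpow_le_zpow_right₀ hM (by omega)) hc

lemma cRad_succ (hM : M ≠ 0) (k : ℕ) : cRad M c (k + 1) = M⁻¹ * cRad M c k := by
  simp only [cRad, Nat.cast_succ, neg_add, zpow_add₀ hM, zpow_neg_one]
  ring

lemma four_mul_cRad_succ_le (hM : 4 ≤ M) (hc : 0 ≤ c) (k : ℕ) :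
    4 * cRad M c (k + 1) ≤ cRad M c k := by
  rw [cRad_succ (by positivity), ← mul_assoc]
  refine mul_le_of_le_one_left (cRad_nonneg (by positivity) hc k) ?_
  rw [← div_eq_mul_inv, div_le_one (by positivity)]
  exact hM

lemma three_mul_cRad_lt (hM : 0 < M) (hc3 : 3 * c < 1) (k : ℕ) :
    3 * cRad M c k < M ^ (-(k : ℤ)) := by
  rw [cRad, ← mul_assoc]
  exact mul_lt_of_lt_one_left (zpow_pos hM _) hc3

end Radius

section Chains

/-! A pair `(k, y)` stands for the ball `B(y, M^{-k}) ∈ 𝓑_k`, whose shrunken ball is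
`cBall M c y k`. -/

def CBallsMeet (M c : ℝ) (p q : ℕ × lInf) : Prop :=
  (cBall M c p.2 p.1 ∩ cBall M c q.2 q.1).Nonempty

lemma CBallsMeet.dist_lt {p q : ℕ × lInf} (h : CBallsMeet M c p q) :
    dist p.2 q.2 < cRad M c p.1 + cRad M c q.1 := by
  obtain ⟨z, hzp, hzq⟩ := h
  calc dist p.2 q.2 ≤ dist z p.2 + dist z q.2 := dist_triangle_left _ _ _
    _ < cRad M c p.1 + cRad M c q.1 := add_lt_add hzp hzq

def IsNetChain (M c : ℝ) (Xn : ℕ → Set lInf) (m : ℕ) (l : List (ℕ × lInf)) : Prop :=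
  (∀ p ∈ l, m ≤ p.1 ∧ p.2 ∈ Xn p.1) ∧ l.IsChain (CBallsMeet M c)

variable {m : ℕ} {l l₁ l₂ : List (ℕ × lInf)}

lemma IsNetChain.append_left (h : IsNetChain M c Xn m (l₁ ++ l₂)) : IsNetChain M c Xn m l₁ :=
  ⟨fun p hp => h.1 p (mem_append_left _ hp), h.2.left_of_append⟩

lemma IsNetChain.append_right (h : IsNetChain M c Xn m (l₁ ++ l₂)) : IsNetChain M c Xn m l₂ :=
  ⟨fun p hp => h.1 p (mem_append_right _ hp), h.2.right_of_append⟩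

lemma IsNetChain.of_le_scales {k : ℕ} (h : IsNetChain M c Xn m l) (hk : ∀ p ∈ l, k ≤ p.1) :
    IsNetChain M c Xn k l :=
  ⟨fun p hp => ⟨hk p hp, (h.1 p hp).2⟩, h.2⟩

lemma IsNetChain.succ_of_forall_ne (h : IsNetChain M c Xn m l) (hne : ∀ p ∈ l, p.1 ≠ m) :
    IsNetChain M c Xn (m + 1) l :=
  h.of_le_scales fun p hp => Nat.lt_of_le_of_ne (h.1 p hp).1 (hne p hp).symm

end Chains

section Bounds

def NetsSeparated (M : ℝ) (Xn : ℕ → Set lInf) : Prop :=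
  ∀ n, ∀ x ∈ Xn n, ∀ y ∈ Xn n, x ≠ y → M ^ (-(n : ℤ)) ≤ dist x y

def BallsWithin (M c : ℝ) (l : List (ℕ × lInf)) (x : lInf) (R : ℝ) : Prop :=
  ∀ p ∈ l, dist x p.2 + cRad M c p.1 ≤ R

variable {l l₁ l₂ : List (ℕ × lInf)} {x y : lInf} {R R' : ℝ}

lemma BallsWithin.mono (h : BallsWithin M c l x R) (hR : R ≤ R') : BallsWithin M c l x R' :=
  fun p hp => (h p hp).trans hR

lemma BallsWithin.recenter (h : BallsWithin M c l y R) (x : lInf) :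
    BallsWithin M c l x (R + dist x y) := fun p hp => by
  linarith [h p hp, dist_triangle x y p.2]

lemma ballsWithin_cons {p : ℕ × lInf} :
    BallsWithin M c (p :: l) x R ↔ dist x p.2 + cRad M c p.1 ≤ R ∧ BallsWithin M c l x R :=
  forall_mem_cons

lemma ballsWithin_append :
    BallsWithin M c (l₁ ++ l₂) x R ↔ BallsWithin M c l₁ x R ∧ BallsWithin M c l₂ x R :=
  forall_mem_append

lemma BallsWithin.dist_lt_of_isChain {e : ℕ × lInf} (h : BallsWithin M c l₁ x R)
    (hl₁ : l₁ ≠ [])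
    (hchain : (l₁ ++ e :: l₂).IsChain (CBallsMeet M c)) : dist x e.2 < R + cRad M c e.1 := by
  have hmeet : CBallsMeet M c (l₁.getLast hl₁) e :=
    hchain.rel_getLast_head_of_append hl₁ (cons_ne_nil _ _)
  have hlast := h _ (getLast_mem hl₁)
  linarith [hmeet.dist_lt, dist_triangle x (l₁.getLast hl₁).2 e.2]

/-- Neither bound can be proved by induction on the length of the chain without the other
one for shorter chains, hence the conjunction. -/
def ChainBounds (M c : ℝ) (Xn : ℕ → Set lInf) (a : ℕ × lInf) (t : List (ℕ × lInf)) :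
    Prop :=
  ∀ m, IsNetChain M c Xn m (a :: t) →
    BallsWithin M c (a :: t) a.2 (4 * cRad M c m - cRad M c a.1) ∧
    (a.1 = m → BallsWithin M c (a :: t) a.2 (cRad M c m + 4 * cRad M c (m + 1)))

variable {m : ℕ} {a : ℕ × lInf} {t : List (ℕ × lInf)}

lemma ballsWithin_sharp_of_forall_scale_ne (hM : 0 ≤ M) (hc : 0 ≤ c)
    (ih : ∀ a' t', t'.length < t.length → ChainBounds M c Xn a' t')
    (ht : IsNetChain M c Xn m (a :: t)) (ha : a.1 = m) (hne : ∀ p ∈ t, p.1 ≠ m) :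
    BallsWithin M c (a :: t) a.2 (cRad M c m + 4 * cRad M c (m + 1)) := by
  have hc4 := cRad_nonneg hM hc (m + 1)
  refine ballsWithin_cons.2 ⟨by rw [dist_self, ha]; linarith, ?_⟩
  cases t with
  | nil => exact fun _ hp => absurd hp not_mem_nil
  | cons q t =>
    have hq := (ih q t (by simp) (m + 1)
      ((ht.append_right (l₁ := [a])).succ_of_forall_ne hne)).1
    have hmeet : CBallsMeet M c a q := (isChain_cons_cons.1 ht.2).1
    refine (hq.recenter a.2).mono ?_
    rw [← ha]
    linarith [hmeet.dist_lt]

lemma ballsWithin_sharp (hM : 4 ≤ M) (hc : 0 ≤ c) (hc3 : 3 * c < 1)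
    (hsep : NetsSeparated M Xn)
    (ih : ∀ a' t', t'.length < t.length → ChainBounds M c Xn a' t')
    (ht : IsNetChain M c Xn m (a :: t)) (ha : a.1 = m) :
    BallsWithin M c (a :: t) a.2 (cRad M c m + 4 * cRad M c (m + 1)) := by
  rcases forall_not_or_exists_first (fun p => p.1 = m) t with
    hne | ⟨t₁, e, t₂, rfl, he, hne⟩
  · exact ballsWithin_sharp_of_forall_scale_ne (by linarith) hc ih ht ha hne
  have ht' : IsNetChain M c Xn m ((a :: t₁) ++ e :: t₂) := ht
  have hpre := ballsWithin_sharp_of_forall_scale_ne (by linarith) hc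
    (fun a' t' h => ih a' t' (by simp at h ⊢; omega)) ht'.append_left ha hne
  -- `e` revisits scale `m` within `3 c M^{-m}` of `a`, so separation makes it the ball `a`.
  have hae : a.2 = e.2 := by
    by_contra hae
    have hdist := hpre.dist_lt_of_isChain (cons_ne_nil _ _) ht'.2
    have hsep' := hsep m a.2 (ha ▸ (ht.1 a mem_cons_self).2) e.2
      (he ▸ (ht'.1 e (by simp)).2) hae
    rw [he] at hdist
    linarith [four_mul_cRad_succ_le hM hc m, three_mul_cRad_lt (M := M) (by linarith) hc3 m]
  have hsuf := ((ih e t₂ (by simp; omega) m ht'.append_right).2 he)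
  rw [← hae] at hsuf
  exact ballsWithin_append.2 ⟨hpre, hsuf⟩

lemma ballsWithin_coarse_of_exists_scale_eq (hM : 4 ≤ M) (hc : 0 ≤ c) (hc3 : 3 * c < 1)
    (hsep : NetsSeparated M Xn)
    (ih : ∀ a' t', t'.length < t.length → ChainBounds M c Xn a' t')
    (ht : IsNetChain M c Xn m (a :: t)) (hm : ∃ p ∈ a :: t, p.1 = m) :
    BallsWithin M c (a :: t) a.2 (4 * cRad M c m - cRad M c a.1) := by
  have h4 := four_mul_cRad_succ_le hM hc m
  have h0 := cRad_nonneg (M := M) (by linarith) hc (m + 1)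
  rcases forall_not_or_exists_first (fun p => p.1 = m) (a :: t) with
    hne | ⟨l₁, e, t₂, hsplit, he, hne⟩
  · obtain ⟨p, hp, hpm⟩ := hm
    exact absurd hpm (hne p hp)
  cases l₁ with
  | nil =>
    obtain ⟨rfl, rfl⟩ := cons_eq_cons.mp hsplit
    refine (ballsWithin_sharp hM hc hc3 hsep ih ht he).mono ?_
    rw [he]
    linarith
  | cons a' t₁ =>
    obtain ⟨rfl, rfl⟩ := cons_eq_cons.mp hsplit
    have ht' : IsNetChain M c Xn m ((a :: t₁) ++ e :: t₂) := ht
    have hpre := (ih a t₁ (by simp) (m + 1) (ht'.append_left.succ_of_forall_ne hne)).1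
    have hdist := hpre.dist_lt_of_isChain (cons_ne_nil _ _) ht'.2
    have hsuf := (ih e t₂ (by simp; omega) m ht'.append_right).2 he
    rw [he] at hdist
    exact ballsWithin_append.2
      ⟨hpre.mono (by linarith), (hsuf.recenter a.2).mono (by linarith)⟩

lemma ballsWithin_coarse (hM : 4 ≤ M) (hc : 0 ≤ c) (hc3 : 3 * c < 1)
    (hsep : NetsSeparated M Xn)
    (ih : ∀ a' t', t'.length < t.length → ChainBounds M c Xn a' t')
    (ht : IsNetChain M c Xn m (a :: t)) :
    BallsWithin M c (a :: t) a.2 (4 * cRad M c m - cRad M c a.1) := by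
  obtain ⟨p, hp, hmin⟩ :=
    Set.exists_min_image _ Prod.fst (a :: t).finite_toSet ⟨a, mem_cons_self⟩
  have hcoarse := ballsWithin_coarse_of_exists_scale_eq hM hc hc3 hsep ih
    (ht.of_le_scales hmin) ⟨p, hp, rfl⟩
  refine hcoarse.mono ?_
  linarith [cRad_antitone (M := M) (by linarith) hc (ht.1 p hp).1]

theorem chainBounds (hM : 4 ≤ M) (hc : 0 ≤ c) (hc3 : 3 * c < 1)
    (hsep : NetsSeparated M Xn)
    (a : ℕ × lInf) (t : List (ℕ × lInf)) : ChainBounds M c Xn a t := by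
  induction hN : t.length using Nat.strong_induction_on generalizing a t with
  | _ N ihN =>
    have ih : ∀ a' t', t'.length < t.length → ChainBounds M c Xn a' t' :=
      fun a' t' h => ihN _ (hN ▸ h) a' t' rfl
    exact fun m ht =>
      ⟨ballsWithin_coarse hM hc hc3 hsep ih ht, ballsWithin_sharp hM hc hc3 hsep ih ht⟩

end Bounds

section Roundness

variable {n : ℕ} {x : lInf}

lemma exists_isNetChain_of_mem_coreAux (hx : x ∈ Xn n) (j : ℕ) {z : lInf}
    (hz : z ∈ coreAux M c Xn x n j) :
    ∃ t p, IsNetChain M c Xn n ((n, x) :: t) ∧ ((n, x) :: t).getLast? = some p ∧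
      z ∈ cBall M c p.2 p.1 := by
  induction j generalizing z with
  | zero => exact ⟨[], (n, x), ⟨by simp [hx], isChain_singleton _⟩, rfl, hz⟩
  | succ j ih =>
    simp only [coreAux, mem_union, mem_iUnion] at hz
    rcases hz with hz | ⟨m, hm, y, hy, ⟨w, hwy, hw⟩, hzy⟩
    · exact ih hz
    obtain ⟨t, p, hchain, hlast, hwp⟩ := ih hw
    refine ⟨t ++ [(m, y)], (m, y), ⟨?_, ?_⟩, getLast?_concat (l := (n, x) :: t), hzy⟩
    · rw [← cons_append, forall_mem_append, forall_mem_singleton]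
      exact ⟨hchain.1, hm, hy⟩
    · rw [← cons_append]
      refine hchain.2.append (isChain_singleton _) ?_
      rw [hlast]
      rintro _ ⟨⟩ _ ⟨⟩
      exact ⟨w, hwp, hwy⟩

theorem core_subset_ball (hM : 4 ≤ M) (hc : 0 ≤ c) (hc3 : 3 * c < 1)
    (hsep : NetsSeparated M Xn)
    (hx : x ∈ Xn n) :
    core M c Xn x n ⊆ ball x ((1 + 4 * M⁻¹) * cRad M c n) := by
  intro z hz
  obtain ⟨j, hj⟩ := mem_iUnion.mp hz
  obtain ⟨t, p, hchain, hlast, hzp⟩ := exists_isNetChain_of_mem_coreAux hx j hj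
  have hp := (chainBounds hM hc hc3 hsep (n, x) t n hchain).2 rfl p (mem_of_getLast? hlast)
  have hrad : (1 + 4 * M⁻¹) * cRad M c n = cRad M c n + 4 * cRad M c (n + 1) := by
    rw [cRad_succ (by positivity)]
    ring
  have hzp' : dist z p.2 < cRad M c p.1 := hzp
  rw [mem_ball, hrad]
  linarith [dist_triangle_right z x p.2]

end Roundness

/-- **Lemma (cubes).** For `M > 4`, `0 < c < 1/8` and nested maximal `M^{-n}`-nets `X_n` of a
compact `X ⊆ ℓ^∞`: (1) any two cubes of `Δ` that meet are nested; (2) every cube `Q = Q_B`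
with `B = B(x, M^{-n})` satisfies `B_Q ⊆ Q ⊆ (1 + 8M⁻¹)B_Q`, where `B_Q = B(x, c·M^{-n})`. -/
theorem cubes_nested_and_round :
    ∀ M c : ℝ, 4 < M → 0 < c → c < 1 / 8 →
      ∀ X : Set lInf, IsCompact X →
        ∀ Xn : ℕ → Set lInf,
          (∀ n, Xn n ⊆ X) →
          (∀ n, Xn n ⊆ Xn (n + 1)) →
          (∀ n, ∀ x ∈ Xn n, ∀ y ∈ Xn n, x ≠ y → M ^ (-(n : ℤ)) ≤ dist x y) →
          (∀ n, ∀ x ∈ X, ∃ y ∈ Xn n, dist x y ≤ M ^ (-(n : ℤ))) →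
          (∀ n m : ℕ, ∀ x ∈ Xn n, ∀ y ∈ Xn m,
              (core M c Xn x n ∩ core M c Xn y m).Nonempty →
              core M c Xn x n ⊆ core M c Xn y m ∨ core M c Xn y m ⊆ core M c Xn x n) ∧
          (∀ n : ℕ, ∀ x ∈ Xn n,
              Metric.ball x (c * M ^ (-(n : ℤ))) ⊆ core M c Xn x n ∧
              core M c Xn x n ⊆ Metric.ball x ((1 + 8 * M⁻¹) * (c * M ^ (-(n : ℤ))))) := by
  intro M c hM hc hc8 X _ Xn _ _ hsep _
  refine ⟨fun n m x hx y hy hmeet => ?_, fun n x hx => ⟨cBall_subset_core x n, ?_⟩⟩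
  · rcases le_total n m with hnm | hmn
    · exact .inr (core_subset_core_of_nonempty hnm hy hmeet)
    · exact .inl (core_subset_core_of_nonempty hmn hx (inter_comm _ _ ▸ hmeet))
  · refine (core_subset_ball hM.le hc.le (by linarith) hsep hx).trans (ball_subset_ball ?_)
    have : 0 < M⁻¹ := by positivity
    gcongr (1 + ?_) * _
    · exact cRad_nonneg (by linarith) hc.le n
    · linarith
end
end

section
/- With the net-and-ball construction below, assume M > 4 and c ∈ (0, 1/4). If B_0, B_1, …, B_k ∈ 𝓑 are pairwise distinct balls such that cB_j ∩ cB_{j+1} ≠ ∅ for every j = 0,…,k−1, then Σ_{j=0}^{k} diam(cB_j) ≤ (1/(1 − 2M⁻¹)) · max_{0≤j≤k} diam(cB_j). -/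
/-!
In `ℓ^∞` the diameter of a ball is twice its radius, so the claim is about the radii
`M^{-ℓ_j}` of the chain. Let `m` be the smallest level in the chain. The ball of level `m` is
unique: two consecutive balls of level `m` have `M^{-m}`-separated centres, and to bridge that
gap with `c`-dilates, `c < 1/4`, the balls strictly between them would need total radius more
than `M^{-m}`, whereas by induction on the length of the chain these balls, all of level `> m`,
have total radius at most `M^{-m-1}/(1 - 2M⁻¹) < M^{-m}`. Removing the unique largest ball splits
the chain into two chains of level `> m`, so by induction the radii sum to at most
`M^{-m} + 2M^{-m-1}/(1 - 2M⁻¹) = M^{-m}/(1 - 2M⁻¹)`.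
-/

open Metric Set MeasureTheory

noncomputable section

open Finset

instance lp.nontrivial {ι : Type*} [Nonempty ι] {E : ι → Type*}
    [∀ i, NormedAddCommGroup (E i)] [∀ i, Nontrivial (E i)] {p : ENNReal} :
    Nontrivial (lp E p) := by
  classical
  obtain ⟨i⟩ := ‹Nonempty ι›
  obtain ⟨e, he⟩ := exists_ne (0 : E i)
  exact ⟨lp.single p i e, 0, fun h => he (by simpa using congr_arg (fun f : lp E p => f i) h)⟩

lemma Nat.exists_next_of_lt {P : ℕ → Prop} {p b : ℕ} (hpb : p < b) (hb : P b) :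
    ∃ q, p < q ∧ q ≤ b ∧ P q ∧ ∀ t, p < t → t < q → ¬ P t := by
  classical
  have hex : ∃ q, p < q ∧ P q := ⟨b, hpb, hb⟩
  obtain ⟨hpq, hq⟩ := Nat.find_spec hex
  exact ⟨Nat.find hex, hpq, Nat.find_min' hex ⟨hpb, hb⟩, hq,
    fun t hpt htq hPt => Nat.find_min hex htq ⟨hpt, hPt⟩⟩

section BallChain

variable {α : Type*} [PseudoMetricSpace α]

lemma dist_le_of_dist_succ_le {x : ℕ → α} {r : ℕ → ℝ} {c : ℝ} :
    ∀ n : ℕ, (∀ j ≤ n, dist (x j) (x (j + 1)) ≤ c * (r j + r (j + 1))) →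
      dist (x 0) (x (n + 1)) ≤ c * (r 0 + r (n + 1)) + 2 * c * ∑ j ∈ range n, r (j + 1)
  | 0, h => by simpa using h 0 le_rfl
  | n + 1, h => by
    have ih := dist_le_of_dist_succ_le n fun j hj => h j (by omega)
    have hn := h (n + 1) le_rfl
    rw [sum_range_succ]
    linarith [dist_triangle (x 0) (x (n + 1)) (x (n + 2))]

/-- `x j` and `ℓ j` are the centre and the level of the ball `B(x j, q ^ ℓ j)`, where
`q = M⁻¹`. -/
structure IsBallChain (q c : ℝ) (k : ℕ) (x : ℕ → α) (ℓ : ℕ → ℕ) : Prop where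
  pow_le_dist :
    ∀ i ≤ k, ∀ j ≤ k, i ≠ j → ℓ i = ℓ j → q ^ ℓ i ≤ dist (x i) (x j)
  dist_succ_le : ∀ j < k, dist (x j) (x (j + 1)) ≤ c * (q ^ ℓ j + q ^ ℓ (j + 1))

namespace IsBallChain

variable {q c : ℝ} {k : ℕ} {x : ℕ → α} {ℓ : ℕ → ℕ}

lemma shift (h : IsBallChain q c k x ℓ) {a b : ℕ} (hab : a + b ≤ k) :
    IsBallChain q c b (fun t => x (a + t)) (fun t => ℓ (a + t)) where
  pow_le_dist i hi j hj hij := h.pow_le_dist _ (by omega) _ (by omega) (by omega)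
  dist_succ_le j hj := h.dist_succ_le (a + j) (by omega)

lemma pow_lt_sum_of_level_eq (hq : 0 < q) (hc : c < 1 / 4) {s m : ℕ}
    (h : IsBallChain q c (s + 1) x ℓ) (h0 : ℓ 0 = m) (hs : ℓ (s + 1) = m) :
    q ^ m < ∑ t ∈ range s, q ^ ℓ (t + 1) := by
  have hsep := h.pow_le_dist 0 (by omega) (s + 1) le_rfl (by omega) (h0.trans hs.symm)
  have hchain := dist_le_of_dist_succ_le (r := fun j => q ^ ℓ j) s
    fun j hj => h.dist_succ_le j (by omega)
  simp only [h0, hs] at hsep hchain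
  have hS : 0 ≤ ∑ t ∈ range s, q ^ ℓ (t + 1) := by positivity
  have hqm : 0 < q ^ m := by positivity
  nlinarith

lemma lt_level_of_ne (hq : 0 < q) (hq4 : q < 1 / 4) (hc : c < 1 / 4)
    (h : IsBallChain q c k x ℓ) {i : ℕ} (hik : i ≤ k) (hmin : ∀ j ≤ k, ℓ i ≤ ℓ j)
    (hseg : ∀ a b, a + b ≤ k → (∀ t < b, ℓ i < ℓ (a + t)) →
      ∑ t ∈ range b, q ^ ℓ (a + t) ≤ q ^ (ℓ i + 1) / (1 - 2 * q))
    {j : ℕ} (hjk : j ≤ k) (hji : j ≠ i) : ℓ i < ℓ j := by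
  suffices hfalse : ∀ p p', p < p' → p' ≤ k → ℓ p = ℓ i → ℓ p' = ℓ i → False by
    by_contra hle
    have hl : ℓ j = ℓ i := le_antisymm (by omega) (hmin j hjk)
    rcases Nat.lt_or_gt_of_ne hji with hlt | hgt
    · exact hfalse j i hlt hik hl rfl
    · exact hfalse i j hgt hjk rfl hl
  intro p p' hpp' hp'k hp hp'
  obtain ⟨p'', hpp'', hp''p', hp'', hgap⟩ :=
    Nat.exists_next_of_lt (P := fun t => ℓ t = ℓ i) hpp' hp'
  obtain ⟨s, rfl⟩ : ∃ s, p'' = p + (s + 1) := ⟨p'' - p - 1, by omega⟩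
  have hlower := (h.shift (a := p) (b := s + 1) (by omega)).pow_lt_sum_of_level_eq hq hc hp hp''
  have hupper := hseg (p + 1) s (by omega) fun t ht => by
    have := hmin (p + 1 + t) (by omega)
    have := hgap (p + 1 + t) (by omega) (by omega)
    omega
  simp only [add_assoc, add_comm 1] at hupper
  have hsmall : q ^ (ℓ i + 1) / (1 - 2 * q) < q ^ ℓ i := by
    rw [div_lt_iff₀ (by linarith), pow_succ]
    exact mul_lt_mul_of_pos_left (by linarith) (by positivity)
  linarith

theorem sum_pow_le (hq : 0 < q) (hq4 : q < 1 / 4) (hc : c < 1 / 4) {m : ℕ}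
    (h : IsBallChain q c k x ℓ) (hm : ∀ j ≤ k, m ≤ ℓ j) :
    ∑ j ∈ range (k + 1), q ^ ℓ j ≤ q ^ m / (1 - 2 * q) := by
  induction k using Nat.strong_induction_on generalizing x ℓ m with
  | _ k ih =>
  have hD : 0 < 1 - 2 * q := by linarith
  have hseg : ∀ a b m', a + b ≤ k + 1 → b ≤ k → (∀ t < b, m' ≤ ℓ (a + t)) →
      ∑ t ∈ range b, q ^ ℓ (a + t) ≤ q ^ m' / (1 - 2 * q) := by
    rintro a (_ | b) m' hab hbk hlev
    · simp only [range_zero, sum_empty]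
      positivity
    · exact ih b (by omega) (h.shift (by omega)) fun t ht => hlev t (by omega)
  obtain ⟨i, hi, hmin⟩ := exists_min_image (range (k + 1)) ℓ nonempty_range_add_one
  have hik : i ≤ k := Nat.lt_succ_iff.mp (mem_range.mp hi)
  have hmin' : ∀ j ≤ k, ℓ i ≤ ℓ j := fun j hj => hmin j (mem_range.mpr (by omega))
  have hunique : ∀ j ≤ k, j ≠ i → ℓ i < ℓ j := fun j =>
    h.lt_level_of_ne hq hq4 hc hik hmin' fun a b hab => hseg a b _ (by omega) (by omega)
  obtain ⟨r, rfl⟩ : ∃ r, k = i + r := ⟨k - i, by omega⟩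
  have hleft := hseg 0 i (ℓ i + 1) (by omega) (by omega) fun t ht => by
    simpa using hunique t (by omega) (by omega)
  have hright := hseg (i + 1) r (ℓ i + 1) (by omega) (by omega) fun t ht =>
    hunique (i + 1 + t) (by omega) (by omega)
  simp only [zero_add] at hleft
  have hmono : q ^ ℓ i ≤ q ^ m := pow_le_pow_of_le_one hq.le (by linarith) (hm i hik)
  calc ∑ j ∈ range (i + r + 1), q ^ ℓ j
      = ∑ j ∈ range i, q ^ ℓ j + q ^ ℓ i + ∑ t ∈ range r, q ^ ℓ (i + 1 + t) := by
        rw [show i + r + 1 = i + 1 + r by omega, sum_range_add, sum_range_succ]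
    _ ≤ q ^ (ℓ i + 1) / (1 - 2 * q) + q ^ ℓ i + q ^ (ℓ i + 1) / (1 - 2 * q) := by gcongr
    _ = q ^ ℓ i / (1 - 2 * q) := by field_simp; ring
    _ ≤ q ^ m / (1 - 2 * q) := by gcongr

end IsBallChain

end BallChain
/-- **Lemma (chains of balls).** Let `M > 4`, `0 < c < 1/4`, and let `(X_n)` be nested maximal
`M^{-n}`-nets in a compact `X ⊆ ℓ^∞`. If `B_0,…,B_k ∈ 𝓑 = {B(x, M^{-n}) : x ∈ X_n, n ≥ 0}`
are pairwise distinct balls with `cB_j ∩ cB_{j+1} ≠ ∅` for all `j < k`, then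
`Σ_j diam(cB_j) ≤ (1/(1 − 2M⁻¹))·max_j diam(cB_j)`. -/
theorem chain_of_balls_diam_sum :
    ∀ M c : ℝ, 4 < M → 0 < c → c < 1 / 4 →
      ∀ X : Set lInf, IsCompact X →
        ∀ Xn : ℕ → Set lInf,
          (∀ n, Xn n ⊆ X) →
          (∀ n, Xn n ⊆ Xn (n + 1)) →
          (∀ n, ∀ x ∈ Xn n, ∀ y ∈ Xn n, x ≠ y → M ^ (-(n : ℤ)) ≤ dist x y) →
          (∀ n, ∀ x ∈ X, ∃ y ∈ Xn n, dist x y ≤ M ^ (-(n : ℤ))) →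
          ∀ (k : ℕ) (x : ℕ → lInf) (lvl : ℕ → ℕ),
            (∀ j ≤ k, x j ∈ Xn (lvl j)) →
            (∀ i ≤ k, ∀ j ≤ k, i ≠ j →
              Metric.ball (x i) (M ^ (-(lvl i : ℤ))) ≠ Metric.ball (x j) (M ^ (-(lvl j : ℤ)))) →
            (∀ j < k, (Metric.ball (x j) (c * M ^ (-(lvl j : ℤ))) ∩
                Metric.ball (x (j + 1)) (c * M ^ (-(lvl (j + 1) : ℤ)))).Nonempty) →
            ∑ j ∈ Finset.range (k + 1),
                Metric.diam (Metric.ball (x j) (c * M ^ (-(lvl j : ℤ)))) ≤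
              (1 / (1 - 2 * M⁻¹)) *
                (Finset.range (k + 1)).sup' Finset.nonempty_range_add_one
                  (fun j => Metric.diam (Metric.ball (x j) (c * M ^ (-(lvl j : ℤ))))) := by
  intro M c hM hc hc4 X _ Xn _ _ hsep _ k x lvl hmem hne hint
  have hpow (n : ℕ) : M ^ (-(n : ℤ)) = M⁻¹ ^ n := by rw [zpow_neg, zpow_natCast, inv_pow]
  have hdiam (j : ℕ) : diam (ball (x j) (c * M ^ (-(lvl j : ℤ)))) = 2 * c * M⁻¹ ^ lvl j := by
    rw [diam_ball_eq _ (by positivity), hpow, mul_assoc]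
  have hchain : IsBallChain M⁻¹ c k x lvl := by
    refine ⟨fun i hi j hj hij hl => ?_, fun j hj => ?_⟩
    · rw [← hpow]
      refine hsep _ _ (hmem i hi) _ (hl ▸ hmem j hj) fun hx => hne i hi j hj hij ?_
      rw [hx, hl]
    · simpa only [hpow, mul_add] using (dist_lt_add_of_nonempty_ball_inter_ball (hint j hj)).le
  obtain ⟨i, hi, hmin⟩ := exists_min_image (range (k + 1)) lvl nonempty_range_add_one
  have hq : (0 : ℝ) < M⁻¹ := by positivity
  have hq4 : M⁻¹ < 1 / 4 := by rw [inv_lt_comm₀ (by linarith) (by norm_num)]; linarith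
  have hsum := hchain.sum_pow_le hq hq4 hc4 fun j hj => hmin j (mem_range.mpr (by omega))
  calc ∑ j ∈ range (k + 1), diam (ball (x j) (c * M ^ (-(lvl j : ℤ))))
      = 2 * c * ∑ j ∈ range (k + 1), M⁻¹ ^ lvl j := by simp only [hdiam, mul_sum]
    _ ≤ 2 * c * (M⁻¹ ^ lvl i / (1 - 2 * M⁻¹)) := by gcongr
    _ = 1 / (1 - 2 * M⁻¹) * diam (ball (x i) (c * M ^ (-(lvl i : ℤ)))) := by rw [hdiam]; ring
    _ ≤ _ := mul_le_mul_of_nonneg_left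
          (le_sup' (fun j => diam (ball (x j) (c * M ^ (-(lvl j : ℤ))))) hi)
          (one_div_nonneg.mpr (by linarith))

end
end

section
/- Let Γ be a metric space and μ a doubling Borel measure on Γ, i.e., there is C ≥ 1 with 0 < μ(B(x,2r)) ≤ C·μ(B(x,r)) < ∞ for all x ∈ Γ and r > 0. Let E ⊆ Γ be a Borel set that is porous: there is α ∈ (0,1) such that for every x ∈ E and every ρ > 0 there exist r ∈ (0,ρ) and y ∈ Γ with d(x,y) < r and B(y, αr) ∩ E = ∅. Then μ(E) = 0. -/
/-!
Since `μ` charges every ball and is finite on balls, the balls of radius `ε / 2` around a maximal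
`ε`-separated set are disjoint sets of positive measure, hence countably many. So `Γ` is second
countable and Lebesgue's density theorem holds for the uniformly locally doubling measure `μ`.
Porosity gives, at every point of `E`, balls `closedBall y δ` with `δ → 0` that miss `E` and whose
dilates by the fixed factor `2 / α` contain the point. Along them the density of `E` is `0`
instead of `1`, so almost no point of `E` lies in `E`.
-/

open Metric Set MeasureTheory Filter Topology Function
open scoped ENNReal NNReal

section Metric

variable {X : Type*} [PseudoMetricSpace X]

def IsPorous (α : ℝ) (E : Set X) : Prop :=
  ∀ x ∈ E, ∀ ρ : ℝ, 0 < ρ → ∃ r : ℝ, 0 < r ∧ r < ρ ∧ ∃ y : X, dist x y < r ∧ ball y (α * r) ∩ E = ∅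

theorem IsPorous.exists_seq_closedBall_inter_eq_empty {α : ℝ} {E : Set X} (hE : IsPorous α E)
    (hα : 0 < α) {x : X} (hx : x ∈ E) :
    ∃ (y : ℕ → X) (δ : ℕ → ℝ), Tendsto δ atTop (𝓝[>] 0) ∧
      (∀ n, x ∈ closedBall (y n) (2 / α * δ n)) ∧ ∀ n, E ∩ closedBall (y n) (δ n) = ∅ := by
  choose r hr0 hrlt y hxy hhole using fun n : ℕ => hE x hx (1 / (n + 1)) Nat.one_div_pos_of_nat
  refine ⟨y, fun n => α * r n / 2, ?_, fun n => ?_, fun n => ?_⟩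
  · refine tendsto_nhdsWithin_of_tendsto_nhds_of_eventually_within _ ?_
      (Eventually.of_forall fun n => mem_Ioi.2 (by have := hr0 n; positivity))
    have hlim := tendsto_one_div_add_atTop_nhds_zero_nat.const_mul (α / 2)
    rw [mul_zero] at hlim
    refine squeeze_zero (fun n => by have := hr0 n; positivity) (fun n => ?_) hlim
    have := hrlt n
    rw [mul_div_right_comm]
    gcongr
  · rw [mem_closedBall]
    field_simp
    exact (hxy n).le
  · rw [inter_comm, eq_empty_iff_forall_notMem]
    rintro z ⟨hz, hzE⟩
    have hzy : dist z (y n) < α * r n :=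
      (mem_closedBall.1 hz).trans_lt (by linarith [mul_pos hα (hr0 n)])
    exact (hhole n).subset ⟨hzy, hzE⟩

end Metric

section Measure

variable {X : Type*} [PseudoMetricSpace X] [MeasurableSpace X]

theorem isOpenPosMeasure_of_measure_ball_pos {μ : Measure X}
    (h : ∀ (x : X) (r : ℝ), 0 < r → 0 < μ (ball x r)) : μ.IsOpenPosMeasure where
  open_pos U hU := by
    rintro ⟨x, hx⟩
    obtain ⟨r, hr, hrU⟩ := isOpen_iff.1 hU x hx
    exact ((h x r hr).trans_le (measure_mono hrU)).ne'

theorem sigmaFinite_of_measure_ball_lt_top {μ : Measure X}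
    (h : ∀ (x : X) (r : ℝ), μ (ball x r) < ∞) : SigmaFinite μ := by
  rcases isEmpty_or_nonempty X with _ | ⟨⟨x₀⟩⟩
  · infer_instance
  refine Measure.sigmaFinite_of_countable (countable_range fun n : ℕ => ball x₀ n)
    (forall_mem_range.2 fun n => h x₀ n) ?_
  rw [sUnion_range]
  exact iUnion_ball_nat x₀

theorem secondCountableTopology_of_isOpenPosMeasure [OpensMeasurableSpace X] (μ : Measure X)
    [SFinite μ] [μ.IsOpenPosMeasure] : SecondCountableTopology X := by
  refine secondCountable_of_almost_dense_set fun ε hε => ?_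
  obtain ⟨N, hN⟩ := zorn_subset {N : Set X | N.Pairwise fun a b => ε ≤ dist a b}
    fun c hcS hc => ⟨⋃₀ c, hc.pairwise_sUnion.2 hcS, fun _ => subset_sUnion_of_mem⟩
  refine ⟨N, ?_, fun x => ?_⟩
  · have hdisj : Pairwise (Disjoint on fun y : N => ball (y : X) (ε / 2)) := by
      intro y z hyz
      refine ball_disjoint_ball ?_
      have := hN.1 y.2 z.2 (Subtype.coe_ne_coe.2 hyz)
      linarith
    have := Measure.countable_meas_pos_of_disjoint_iUnion (μ := μ) (fun _ => measurableSet_ball)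
      hdisj
    simp only [isOpen_ball.measure_pos μ (nonempty_ball.2 (half_pos hε)), ofPred_true,
      countable_univ_iff] at this
    exact countable_coe_iff.1 this
  · by_contra! hfar
    have hxN : x ∈ N :=
      hN.2 (hN.1.insert fun y hy _ => ⟨(hfar y hy).le, dist_comm x y ▸ (hfar y hy).le⟩)
        (subset_insert x N) (mem_insert x N)
    exact (hfar x hxN).not_ge (by simpa using hε.le)

theorem IsUnifLocDoublingMeasure.of_measure_ball_two_mul_le {μ : Measure X} {C : ℝ≥0}
    (h : ∀ (x : X) (r : ℝ), 0 < r → μ (ball x (2 * r)) ≤ C * μ (ball x r)) :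
    IsUnifLocDoublingMeasure μ := by
  refine ⟨C * C, eventually_nhdsWithin_of_forall fun ε (hε : 0 < ε) x => ?_⟩
  calc μ (closedBall x (2 * ε)) ≤ μ (ball x (2 * (2 * ε))) :=
        measure_mono (closedBall_subset_ball (by linarith))
    _ ≤ C * (C * μ (ball x ε)) := (h x _ (by positivity)).trans (by gcongr; exact h x ε hε)
    _ ≤ ↑(C * C) * μ (closedBall x ε) := by
        rw [ENNReal.coe_mul, mul_assoc]
        gcongr
        exact ball_subset_closedBall

variable [BorelSpace X] [SecondCountableTopology X] (μ : Measure X) [IsLocallyFiniteMeasure μ]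
  [IsUnifLocDoublingMeasure μ]

/-- By Lebesgue's density theorem almost every point of `S` sees density one along such balls. -/
theorem IsUnifLocDoublingMeasure.measure_eq_zero_of_forall_exists_null_closedBall {S : Set X}
    (K : ℝ) (h : ∀ x ∈ S, ∃ (y : ℕ → X) (δ : ℕ → ℝ), Tendsto δ atTop (𝓝[>] 0) ∧
      (∀ n, x ∈ closedBall (y n) (K * δ n)) ∧ ∀ n, μ (S ∩ closedBall (y n) (δ n)) = 0) :
    μ S = 0 := by
  suffices ∀ᵐ x ∂μ.restrict S, x ∉ S by
    rwa [← measure_eq_zero_iff_ae_notMem, Measure.restrict_apply_self] at this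
  filter_upwards [ae_tendsto_measure_inter_div μ S K] with x hx hxS
  obtain ⟨y, δ, hδ, hxy, hnull⟩ := h x hxS
  have hdensity := hx y δ hδ (Eventually.of_forall hxy)
  simp only [hnull, ENNReal.zero_div] at hdensity
  exact zero_ne_one (tendsto_nhds_unique tendsto_const_nhds hdensity)

theorem IsPorous.measure_eq_zero {α : ℝ} {E : Set X} (hE : IsPorous α E) (hα : 0 < α) :
    μ E = 0 :=
  IsUnifLocDoublingMeasure.measure_eq_zero_of_forall_exists_null_closedBall μ (2 / α) fun x hx =>
    let ⟨y, δ, hδ, hxy, hhole⟩ := hE.exists_seq_closedBall_inter_eq_empty hα hx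
    ⟨y, δ, hδ, hxy, fun n => by rw [hhole n, measure_empty]⟩

end Measure

/-- **Lemma.** A porous subset of a metric space carrying a doubling Borel measure has measure
zero. -/
theorem porous_of_doubling_measure_zero :
    ∀ (Γ : Type*) [MetricSpace Γ] [MeasurableSpace Γ] [BorelSpace Γ],
      ∀ μ : Measure Γ,
        (∃ C : ℝ, 1 ≤ C ∧ ∀ (x : Γ) (r : ℝ), 0 < r →
          0 < μ (Metric.ball x (2 * r)) ∧
          μ (Metric.ball x (2 * r)) ≤ ENNReal.ofReal C * μ (Metric.ball x r) ∧
          ENNReal.ofReal C * μ (Metric.ball x r) < ⊤) →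
        ∀ E : Set Γ, MeasurableSet E →
          (∃ α : ℝ, 0 < α ∧ α < 1 ∧
            ∀ x ∈ E, ∀ ρ : ℝ, 0 < ρ →
              ∃ r : ℝ, 0 < r ∧ r < ρ ∧
                ∃ y : Γ, dist x y < r ∧ Metric.ball y (α * r) ∩ E = ∅) →
          μ E = 0 := by
  rintro Γ _ _ _ μ ⟨C, hC1, hC⟩ E - ⟨α, hα, -, hE⟩
  have hpos : ∀ (x : Γ) (r : ℝ), 0 < r → 0 < μ (ball x r) := fun x r hr => by
    simpa [mul_div_cancel₀] using (hC x (r / 2) (half_pos hr)).1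
  have hfin : ∀ (x : Γ) (r : ℝ), μ (ball x r) < ∞ := by
    intro x r
    rcases le_or_gt r 0 with hr | hr
    · simp [ball_eq_empty.2 hr]
    · exact (le_mul_of_one_le_left' (ENNReal.one_le_ofReal.2 hC1)).trans_lt (hC x r hr).2.2
  have := isOpenPosMeasure_of_measure_ball_pos hpos
  have := sigmaFinite_of_measure_ball_lt_top hfin
  have := secondCountableTopology_of_isOpenPosMeasure μ
  have : IsLocallyFiniteMeasure μ := ⟨fun x => ⟨ball x 1, ball_mem_nhds x one_pos, hfin x 1⟩⟩
  have := IsUnifLocDoublingMeasure.of_measure_ball_two_mul_le fun x r hr => (hC x r hr).2.1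
  exact IsPorous.measure_eq_zero μ hE hα
end

section
/- Let H be a real Hilbert space and s : [0,1] → H a continuous curve of finite length ℓ(s) with s(0) ≠ s(1), and let L be the affine line through s(0) and s(1). Then for every t ∈ [0,1]: dist(s(t), L)² ≤ ℓ(s)·(ℓ(s) − ‖s(0)−s(1)‖)/2. -/
open Metric Set

/-! The chord `s 0 s 1` and the point `p = s t` span a triangle whose two other sides have total
length `a + b ≤ ℓ(s)`. Reflecting `p` in the chord and applying the triangle inequality (the
focal property of the ellipse with foci `s 0`, `s 1`) gives `c² + 4 d² ≤ (a + b)²`, where `c`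
is the length of the chord and `d` the distance from `p` to its line. Hence
`4 d² ≤ ℓ² − c² = (ℓ − c)(ℓ + c) ≤ 2 ℓ (ℓ − c)`. -/

section InnerProductSpace

variable {F : Type*} [NormedAddCommGroup F] [InnerProductSpace ℝ F]

lemma norm_sq_add_four_mul_norm_sq_le {w r : F} (h : inner ℝ r w = 0) (x : ℝ) :
    ‖w‖ ^ 2 + 4 * ‖r‖ ^ 2 ≤ (‖x • w + r‖ + ‖(x - 1) • w + r‖) ^ 2 := by
  have hr : inner ℝ r (x • w) = 0 := by rw [inner_smul_right, h, mul_zero]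
  -- `x • w - r` is the reflection of `x • w + r` in the line `ℝ ∙ w`.
  have hreflect : ‖x • w + r‖ = ‖x • w - r‖ := (norm_sub_eq_norm_add hr).symm
  have hpyth : ‖w - (2 : ℝ) • r‖ ^ 2 = ‖w‖ ^ 2 + 4 * ‖r‖ ^ 2 := by
    rw [norm_sub_sq_real, inner_smul_right, real_inner_comm, h, norm_smul, Real.norm_two]
    ring
  have htriangle : ‖w - (2 : ℝ) • r‖ ≤ ‖x • w + r‖ + ‖(x - 1) • w + r‖ := by
    calc ‖w - (2 : ℝ) • r‖ = ‖(x • w - r) - ((x - 1) • w + r)‖ := by congr 1; module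
      _ ≤ ‖x • w - r‖ + ‖(x - 1) • w + r‖ := norm_sub_le _ _
      _ = ‖x • w + r‖ + ‖(x - 1) • w + r‖ := by rw [hreflect]
  rw [← hpyth]
  exact pow_le_pow_left₀ (norm_nonneg _) htriangle 2

lemma sq_dist_add_four_mul_sq_infDist_line_le (A B p : F) :
    dist A B ^ 2 + 4 * infDist p {y | ∃ u : ℝ, y = A + u • (B - A)} ^ 2 ≤
      (dist p A + dist p B) ^ 2 := by
  set w := B - A
  obtain ⟨x, hx⟩ := Submodule.mem_span_singleton.1 ((ℝ ∙ w).starProjection_apply_mem (p - A))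
  set r := p - A - x • w with hr_def
  have hr : inner ℝ r w = 0 := by
    rw [← Submodule.mem_orthogonal_singleton_iff_inner_left, hr_def, hx]
    exact (ℝ ∙ w).sub_starProjection_mem_orthogonal (p - A)
  have hfoot : infDist p {y | ∃ u : ℝ, y = A + u • (B - A)} ≤ ‖r‖ := by
    calc infDist p {y | ∃ u : ℝ, y = A + u • (B - A)} ≤ dist p (A + x • w) :=
          infDist_le_dist_of_mem ⟨x, rfl⟩
      _ = ‖r‖ := by rw [dist_eq_norm, hr_def, sub_add_eq_sub_sub]
  have hAB : dist A B = ‖w‖ := dist_comm A B ▸ dist_eq_norm B A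
  have hpA : dist p A = ‖x • w + r‖ := by rw [dist_eq_norm, hr_def, add_sub_cancel]
  have hpB : dist p B = ‖(x - 1) • w + r‖ := by rw [dist_eq_norm, hr_def]; congr 1; module
  calc _ ≤ ‖w‖ ^ 2 + 4 * ‖r‖ ^ 2 := by rw [hAB]; gcongr; exact infDist_nonneg
    _ ≤ _ := norm_sq_add_four_mul_norm_sq_le hr x
    _ = _ := by rw [hpA, hpB]

end InnerProductSpace

lemma dist_add_dist_le_eVariationOn_toReal {α E : Type*} [LinearOrder α] [PseudoMetricSpace E]
    (f : α → E) {a t b : α} (hat : a ≤ t) (htb : t ≤ b) (hfin : eVariationOn f (Icc a b) ≠ ⊤) :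
    dist (f a) (f t) + dist (f t) (f b) ≤ (eVariationOn f (Icc a b)).toReal := by
  have hsplit := eVariationOn.Icc_add_Icc f (s := Icc a b) hat htb ⟨hat, htb⟩
  rw [Icc_inter_Icc, Icc_inter_Icc, inter_self, max_self, min_eq_right htb, max_eq_right hat,
    min_self] at hsplit
  have hle : edist (f a) (f t) + edist (f t) (f b) ≤ eVariationOn f (Icc a b) :=
    hsplit ▸ add_le_add (eVariationOn.edist_le f ⟨le_rfl, hat⟩ ⟨hat, le_rfl⟩)
      (eVariationOn.edist_le f ⟨le_rfl, htb⟩ ⟨htb, le_rfl⟩)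
  rw [dist_edist, dist_edist, ← ENNReal.toReal_add (edist_ne_top _ _) (edist_ne_top _ _)]
  exact ENNReal.toReal_mono hfin hle

/-- **Lemma (Pythagorean estimate).** If `s : [0,1] → H` is a continuous curve of finite
length `ℓ(s)` in a real Hilbert space with `s 0 ≠ s 1`, and `L` is the affine line through
`s 0` and `s 1`, then `dist(s t, L)² ≤ ℓ(s)·(ℓ(s) − ‖s 0 − s 1‖)/2` for every `t ∈ [0,1]`. -/
theorem dist_to_chord_sq_le :
    ∀ (H : Type*) [NormedAddCommGroup H] [InnerProductSpace ℝ H],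
      ∀ s : ℝ → H, ContinuousOn s (Set.Icc 0 1) →
        eVariationOn s (Set.Icc 0 1) ≠ ⊤ → s 0 ≠ s 1 →
        ∀ t ∈ Set.Icc (0 : ℝ) 1,
          Metric.infDist (s t) {y | ∃ u : ℝ, y = s 0 + u • (s 1 - s 0)} ^ 2 ≤
            (eVariationOn s (Set.Icc 0 1)).toReal *
              ((eVariationOn s (Set.Icc 0 1)).toReal - dist (s 0) (s 1)) / 2 := by
  intro H _ _ s _ hfin _ t ht
  set ℓ := (eVariationOn s (Icc 0 1)).toReal
  set d := infDist (s t) {y | ∃ u : ℝ, y = s 0 + u • (s 1 - s 0)}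
  set c := dist (s 0) (s 1)
  set σ := dist (s t) (s 0) + dist (s t) (s 1)
  have hchord : c ^ 2 + 4 * d ^ 2 ≤ σ ^ 2 := sq_dist_add_four_mul_sq_infDist_line_le _ _ _
  have hσ : σ ≤ ℓ := by
    simpa only [σ, dist_comm (s t) (s 0)] using
      dist_add_dist_le_eVariationOn_toReal s ht.1 ht.2 hfin
  have hσ₀ : 0 ≤ σ := dist_nonneg.trans (dist_triangle_left _ _ _)
  calc d ^ 2 ≤ (σ ^ 2 - c ^ 2) / 4 := by linarith
    _ ≤ (ℓ ^ 2 - c ^ 2) / 4 := by gcongr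
    _ ≤ ℓ * (ℓ - c) / 2 := by nlinarith [sq_nonneg (ℓ - c)]
end
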